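/- Every epistemic-gap-free decision-making mechanism with imperfect information is an elected semi-epistemic dictatorship: if at each leaf node some agent is epistemically responsible, then every root-to-leaf decision path contains a node at which some agent is a semi-epistemic dictator. -/

import Mathlib

inductive Outcome where
  | yes : Outcome
  | no : Outcome
deriving DecidableEq

def Outcome.flip : Outcome → Outcome
  | .yes => .no
  | .no => .yes

/-- A decision-making mechanism (perfect information):
a finite rooted directed tree `(V, E)` with root `root`,
agents `A`, actions `Act`, available-action sets `Δ`,
choice functions `τ`, and a leaf labelling `lab`. -/
structure Mech (V A Act : Type) where
  finV : Fintype V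
  E : V → V → Prop
  root : V
  root_no_parent : ∀ v, ¬ E v root
  unique_parent : ∀ u v w, E u w → E v w → u = v
  reach : ∀ v, Relation.ReflTransGen E root v
  Δ : A → V → Set Act
  Δ_nonempty : ∀ a v, (∃ u, E v u) → (Δ a v).Nonempty
  τ : V → (A → Act) → V
  τ_child : ∀ v δ, (∃ u, E v u) → (∀ b, δ b ∈ Δ b v) → E v (τ v δ)
  lab : V → Outcome

namespace Mech

variable {V A Act : Type}

def IsLeaf (M : Mech V A Act) (v : V) : Prop := ∀ u, ¬ M.E v u

def IsDecision (M : Mech V A Act) (v : V) : Prop := ∃ u, M.E v u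

/-- `Next a d v` : the set of children the process can move to from `v`
when agent `a` chooses action `d`. -/
def Next (M : Mech V A Act) (a : A) (d : Act) (v : V) : Set V :=
  { u | ∃ δ : A → Act, (∀ b, δ b ∈ M.Δ b v) ∧ δ a = d ∧ u = M.τ v δ }

/-- `win_a(o)`: the smallest set containing all leaves labelled `o` and
closed under: if `Next a d v ⊆ win_a(o)` for some available action `d`
at a decision node `v`, then `v ∈ win_a(o)`. -/
inductive Win (M : Mech V A Act) (a : A) (o : Outcome) : V → Prop where
  | leaf (v : V) : M.IsLeaf v → M.lab v = o → Win M a o v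
  | step (v : V) (d : Act) : M.IsDecision v → d ∈ M.Δ a v →
      (∀ u ∈ M.Next a d v, Win M a o u) → Win M a o v

/-- A decision path starting at the root. -/
def RootPath (M : Mech V A Act) (l : List V) : Prop :=
  l.head? = some M.root ∧ l.Chain' M.E

/-- Agent `a` is (counterfactually) responsible at leaf `v`. -/
def Responsible (M : Mech V A Act) (a : A) (v : V) : Prop :=
  ∃ l : List V, M.RootPath l ∧ l.getLast? = some v ∧
    ∃ u ∈ l, M.IsDecision u ∧ M.Win a (M.lab v).flip u

def GapFree (M : Mech V A Act) : Prop :=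
  ∀ v, M.IsLeaf v → ∃ a, M.Responsible a v

def Dictator (M : Mech V A Act) (a : A) (v : V) : Prop :=
  M.Win a Outcome.yes v ∧ M.Win a Outcome.no v

def ElectedDictatorship (M : Mech V A Act) : Prop :=
  ∀ (l : List V) (v : V), M.RootPath l → l.getLast? = some v → M.IsLeaf v →
    ∃ u ∈ l, ∃ a, M.Dictator a u

end Mech

/-- A decision-making mechanism with imperfect information. -/
structure IMech (V A Act : Type) extends Mech V A Act where
  sim : A → V → V → Prop
  sim_equiv : ∀ a, Equivalence (sim a)
  sim_decision : ∀ a u v, sim a u v → ((∃ w, E u w) ↔ (∃ w, E v w))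
  sim_Δ : ∀ a u v, sim a u v → Δ a u = Δ a v

namespace IMech

variable {V A Act : Type}

/-- `Next a d ([v]_a)` : the union of `Next a d u` over all `u ∼_a v`. -/
def NextCl (M : IMech V A Act) (a : A) (d : Act) (v : V) : Set V :=
  { w | ∃ u, M.sim a v u ∧ w ∈ M.toMech.Next a d u }

/-- `ewin_a(o)`. -/
inductive EWin (M : IMech V A Act) (a : A) (o : Outcome) : V → Prop where
  | leaf (v : V) : M.toMech.IsLeaf v → M.lab v = o → EWin M a o v
  | known (v : V) (d : Act) : M.toMech.IsDecision v → d ∈ M.Δ a v →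
      (∀ w ∈ M.NextCl a d v, EWin M a o w) → EWin M a o v
  | blind (v : V) : M.toMech.IsDecision v →
      (∀ d ∈ M.Δ a v, ∀ w ∈ M.toMech.Next a d v, EWin M a o w) → EWin M a o v

/-- `uwin_a(o)`. -/
inductive UWin (M : IMech V A Act) (a : A) (o : Outcome) : V → Prop where
  | leaf (v : V) : M.toMech.IsLeaf v → M.lab v = o → UWin M a o v
  | known (v : V) (d : Act) : M.toMech.IsDecision v → d ∈ M.Δ a v →
      (∀ w ∈ M.NextCl a d v, UWin M a o w) → UWin M a o v

def EpistemicallyResponsible (M : IMech V A Act) (a : A) (v : V) : Prop :=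
  ∃ l : List V, M.toMech.RootPath l ∧ l.getLast? = some v ∧
    ∃ u ∈ l, M.toMech.IsDecision u ∧ M.EWin a (M.lab v).flip u

def EpistemicGapFree (M : IMech V A Act) : Prop :=
  ∀ v, M.toMech.IsLeaf v → ∃ a, M.EpistemicallyResponsible a v

def EpistemicDictator (M : IMech V A Act) (a : A) (v : V) : Prop :=
  M.EWin a Outcome.yes v ∧ M.EWin a Outcome.no v

def ElectedEpistemicDictatorship (M : IMech V A Act) : Prop :=
  ∀ (l : List V) (v : V), M.toMech.RootPath l → l.getLast? = some v →
    M.toMech.IsLeaf v → ∃ u ∈ l, ∃ a, M.EpistemicDictator a u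

def SemiEpistemicDictator (M : IMech V A Act) (a : A) (v : V) : Prop :=
  ∃ o : Outcome, M.EWin a o v ∧ M.toMech.Win a o.flip v

def ElectedSemiEpistemicDictatorship (M : IMech V A Act) : Prop :=
  ∀ (l : List V) (v : V), M.toMech.RootPath l → l.getLast? = some v →
    M.toMech.IsLeaf v → ∃ u ∈ l, ∃ a, M.SemiEpistemicDictator a u

end IMech

/-!
Suppose agent `b` can force `o` at `x` in the perfect-information game (`win`) but cannot force
`ō`. Playing `b`'s forcing action and moving to a child from which `b` still cannot force `ō`,
we descend to a leaf labelled `o`. Gap-freeness yields an agent `a` and a node `u` above that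
leaf with `u ∈ ewin_a(ō) ⊆ win_a(ō)`. Distinct agents cannot force opposite outcomes at the
same node (the profile combining their forcing actions leads to a child where both still
force), so `u` is not on the descent: it lies strictly above `x`. Climbing in this way from the
node that gap-freeness supplies at a leaf, well-foundedness of the parent relation produces a
node where some agent is in `ewin(o)` and in `win(ō)`; it is an ancestor of the leaf, hence on
every root path to it.
-/

namespace Mech

variable {V A Act : Type} (M : Mech V A Act)

theorem wellFounded_E : WellFounded M.E := by
  refine ⟨fun v => ?_⟩
  induction M.reach v with
  | refl => exact ⟨_, fun u hu => absurd hu (M.root_no_parent u)⟩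
  | tail _ hbc ih => exact ⟨_, fun u hu => M.unique_parent _ _ _ hu hbc ▸ ih⟩

variable {M}

theorem not_isDecision_of_isLeaf {v : V} (hv : M.IsLeaf v) : ¬M.IsDecision v :=
  fun ⟨u, hu⟩ => hv u hu

theorem E_of_mem_next {a : A} {d : Act} {u v : V} (hu : u ∈ M.Next a d v)
    (hv : M.IsDecision v) : M.E v u := by
  obtain ⟨δ, hδ, -, rfl⟩ := hu
  exact M.τ_child v δ hv hδ

theorem exists_mem_next_inter {a b : A} (hab : a ≠ b) {v : V} (hv : M.IsDecision v)
    {d d' : Act} (hd : d ∈ M.Δ a v) (hd' : d' ∈ M.Δ b v) :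
    ∃ u, u ∈ M.Next a d v ∧ u ∈ M.Next b d' v := by
  classical
  let δ : A → Act :=
    Function.update (Function.update (fun c => (M.Δ_nonempty c v hv).some) b d') a d
  have hδ : ∀ c, δ c ∈ M.Δ c v := by
    intro c
    simp only [δ, Function.update_apply]
    split_ifs with hca hcb
    · exact hca ▸ hd
    · exact hcb ▸ hd'
    · exact (M.Δ_nonempty c v hv).some_mem
  exact ⟨M.τ v δ, ⟨δ, hδ, by simp [δ], rfl⟩,
    ⟨δ, hδ, by simp [δ, hab.symm], rfl⟩⟩

theorem exists_mem_next_not_win {a : A} {o : Outcome} {v : V} (hv : M.IsDecision v)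
    (hnw : ¬M.Win a o v) {d : Act} (hd : d ∈ M.Δ a v) :
    ∃ u ∈ M.Next a d v, ¬M.Win a o u := by
  by_contra! h
  exact hnw (.step v d hv hd h)

theorem Win.eq_of_win_flip {a b : A} {o : Outcome} {v : V} (ha : M.Win a o v)
    (hb : M.Win b o.flip v) : a = b := by
  induction ha with
  | leaf v hleaf hlab =>
    cases hb with
    | leaf _ _ hlab' => cases o <;> simp [hlab, Outcome.flip] at hlab'
    | step _ _ hdec _ _ => exact absurd hdec (not_isDecision_of_isLeaf hleaf)
  | step v d hdec hd _ ih =>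
    cases hb with
    | leaf _ hleaf _ => exact absurd hdec (not_isDecision_of_isLeaf hleaf)
    | step _ d' _ hd' hall' =>
      by_contra hab
      obtain ⟨u, hu, hu'⟩ := exists_mem_next_inter hab hdec hd hd'
      exact hab (ih u hu (hall' u hu'))

theorem reflTransGen_parent_of_transGen {u v c : V} (huc : Relation.TransGen M.E u c)
    (hvc : M.E v c) : Relation.ReflTransGen M.E u v := by
  obtain ⟨w, huw, hwc⟩ := Relation.TransGen.tail'_iff.mp huc
  exact M.unique_parent w v c hwc hvc ▸ huw

theorem mem_or_head?_eq_of_isChain {l : List V} (hl : l.IsChain M.E) {w c : V} (hc : c ∈ l)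
    (hwc : M.E w c) : w ∈ l ∨ l.head? = some c := by
  induction l with
  | nil => simp at hc
  | cons x t ih =>
    rcases List.mem_cons.mp hc with rfl | hc
    · simp
    · obtain ⟨hx, ht⟩ := List.isChain_cons.mp hl
      rcases ih ht hc with hw | hhead
      · exact .inl (List.mem_cons_of_mem x hw)
      · rw [M.unique_parent _ _ _ hwc (hx c hhead)]
        exact .inl List.mem_cons_self

theorem RootPath.mem_iff {l : List V} (hl : M.RootPath l) {v : V} (hv : l.getLast? = some v)
    {w : V} : w ∈ l ↔ Relation.ReflTransGen M.E w v := by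
  refine ⟨fun hw => ?_, fun hwv => ?_⟩
  · refine List.IsChain.backwards_induction (Relation.ReflTransGen M.E · v) l hl.2
      (fun _ _ hxy h => h.head hxy) (fun _ => ?_) w hw
    rw [List.getLast_of_getLast?_eq_some hv]
  · induction hwv using Relation.ReflTransGen.head_induction_on with
    | refl => exact List.mem_of_getLast? hv
    | @head w c hwc _ hc =>
      refine (M.mem_or_head?_eq_of_isChain hl.2 hc hwc).resolve_right fun hhead => ?_
      obtain rfl : c = M.root := Option.some_inj.mp (hhead.symm.trans hl.1)
      exact M.root_no_parent w hwc

end Mech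

namespace IMech

variable {V A Act : Type} {M : IMech V A Act}

theorem EWin.win {a : A} {o : Outcome} {v : V} (h : M.EWin a o v) : M.Win a o v := by
  induction h with
  | leaf v hleaf hlab => exact .leaf v hleaf hlab
  | known v d hdec hd _ ih =>
    exact .step v d hdec hd fun u hu => ih u ⟨v, (M.sim_equiv a).refl v, hu⟩
  | blind v hdec _ ih =>
    obtain ⟨d, hd⟩ := M.Δ_nonempty a v hdec
    exact .step v d hdec hd fun u hu => ih d hd u hu

theorem exists_transGen_ewin_flip_of_not_win (hgap : M.EpistemicGapFree) {b : A} {o : Outcome}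
    {y : V} (hw : M.Win b o y) (hnw : ¬M.Win b o.flip y) :
    ∃ u, Relation.TransGen M.E u y ∧ ∃ a, M.EWin a o.flip u := by
  induction hw with
  | leaf y hleaf hlab =>
    obtain ⟨a, l, hl, hlast, u, hu, hudec, hE⟩ := hgap y hleaf
    rw [hlab] at hE
    rcases Relation.reflTransGen_iff_eq_or_transGen.mp ((hl.mem_iff hlast).mp hu)
      with rfl | huy
    · exact absurd hudec (Mech.not_isDecision_of_isLeaf hleaf)
    · exact ⟨u, huy, a, hE⟩
  | step y d hdec hd hall ih =>
    obtain ⟨c, hc, hnc⟩ := Mech.exists_mem_next_not_win hdec hnw hd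
    obtain ⟨u, huc, a, hE⟩ := ih c hc hnc
    rcases Relation.reflTransGen_iff_eq_or_transGen.mp
      (Mech.reflTransGen_parent_of_transGen huc (Mech.E_of_mem_next hc hdec)) with rfl | huy
    · obtain rfl := Mech.Win.eq_of_win_flip (.step _ d hdec hd hall) hE.win
      exact absurd hE.win hnw
    · exact ⟨u, huy, a, hE⟩

theorem exists_semiEpistemicDictator_of_ewin (hgap : M.EpistemicGapFree) {b : A}
    {o : Outcome} {x : V} (hx : M.EWin b o x) :
    ∃ w, Relation.ReflTransGen M.E w x ∧ ∃ a, M.SemiEpistemicDictator a w := by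
  induction x using M.wellFounded_E.transGen.induction generalizing b o with
  | _ x ih =>
    by_cases hflip : M.Win b o.flip x
    · exact ⟨x, .refl, b, o, hx, hflip⟩
    obtain ⟨u, hux, a, hu⟩ := exists_transGen_ewin_flip_of_not_win hgap hx.win hflip
    obtain ⟨w, hwu, hw⟩ := ih u hux hu
    exact ⟨w, hwu.trans hux.to_reflTransGen, hw⟩

end IMech

theorem stmt7 {V A Act : Type} (M : IMech V A Act)
    (h : M.EpistemicGapFree) : M.ElectedSemiEpistemicDictatorship := by
  intro l v hl hlast hleaf
  obtain ⟨a, l', hl', hlast', u, hu, -, hE⟩ := h v hleaf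
  obtain ⟨w, hwu, hw⟩ := IMech.exists_semiEpistemicDictator_of_ewin h hE
  exact ⟨w, (hl.mem_iff hlast).mpr (hwu.trans ((hl'.mem_iff hlast').mp hu)), hw⟩
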